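/- For every integer r ≥ 2, the sequence (1, r, C(r,2)+r−1, C(r,2)) is a pure O-sequence, where C(n,k) denotes the binomial coefficient. -/

import Mathlib

/-- The degree of a monomial, modeled as a finitely supported exponent vector. -/
def monDeg {r : ℕ} (m : Fin r →₀ ℕ) : ℕ := m.sum fun _ e => e

/-- A (monomial) order ideal: a finite nonempty set of monomials closed under divisibility. -/
def IsOrderIdeal {r : ℕ} (X : Finset (Fin r →₀ ℕ)) : Prop :=
  X.Nonempty ∧ ∀ m ∈ X, ∀ n : Fin r →₀ ℕ, n ≤ m → n ∈ X

/-- An order ideal is pure if all its maximal monomials (w.r.t. divisibility) have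
the same degree. -/
def IsPureSet {r : ℕ} (X : Finset (Fin r →₀ ℕ)) : Prop :=
  ∀ m ∈ X, ∀ n ∈ X, (∀ p ∈ X, m ≤ p → p = m) → (∀ p ∈ X, n ≤ p → p = n) →
    monDeg m = monDeg n

/-- The number of monomials of `X` of degree `i`. -/
def degCount {r : ℕ} (X : Finset (Fin r →₀ ℕ)) (i : ℕ) : ℕ :=
  (X.filter fun m => monDeg m = i).card

/-- `h` is the h-vector `(h_0, …, h_e)` of `X`, where `e` is the top degree of `X`. -/
def IsHVectorOf {r : ℕ} (X : Finset (Fin r →₀ ℕ)) (h : List ℕ) : Prop :=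
  h ≠ [] ∧ (∀ i, degCount X i = h.getD i 0) ∧ degCount X (h.length - 1) ≠ 0

/-- A finite sequence is an O-sequence if it is the h-vector of a monomial order ideal. -/
def IsOSequence (h : List ℕ) : Prop :=
  ∃ (r : ℕ) (X : Finset (Fin r →₀ ℕ)), IsOrderIdeal X ∧ IsHVectorOf X h

/-- A finite sequence is a pure O-sequence if it is the h-vector of a pure monomial
order ideal. -/
def IsPureOSequence (h : List ℕ) : Prop :=
  ∃ (r : ℕ) (X : Finset (Fin r →₀ ℕ)), IsOrderIdeal X ∧ IsPureSet X ∧ IsHVectorOf X h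

/-! The order ideal generated by the `C(r,2)` monomials `y_i y_j²` with `i < j` is pure of
degree 3. Below each generator `y_i y_j²` lie, in degree 2, exactly `y_i y_j` and `y_j²`: the
former are `C(r,2)` distinct monomials, the latter are the `r - 1` squares `y_j²` with `j > 0`.
Every variable divides some generator once `r ≥ 2`. -/

open Finset Finsupp

section Degree

variable {r : ℕ}

lemma monDeg_eq_degree (m : Fin r →₀ ℕ) : monDeg m = m.degree := rfl

lemma Finsupp.eq_of_le_of_degree_eq {σ : Type*} {a b : σ →₀ ℕ} (hab : a ≤ b)
    (hd : a.degree = b.degree) : a = b := by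
  obtain ⟨c, rfl⟩ := le_iff_exists_add.mp hab
  rw [map_add, left_eq_add, degree_eq_zero_iff] at hd
  rw [hd, add_zero]

lemma Finsupp.exists_add_single_eq_of_le_of_degree_eq_succ {σ : Type*} {a b : σ →₀ ℕ}
    (hab : a ≤ b) (hd : b.degree = a.degree + 1) : ∃ k, a + single k 1 = b := by
  obtain ⟨c, rfl⟩ := le_iff_exists_add.mp hab
  rw [map_add, add_right_inj] at hd
  obtain ⟨k, rfl⟩ : c ∈ Set.range (fun k : σ ↦ single k 1) := by
    rw [range_single_one]; exact hd
  exact ⟨k, rfl⟩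

lemma degCount_zero_of_isOrderIdeal {X : Finset (Fin r →₀ ℕ)} (hX : IsOrderIdeal X) :
    degCount X 0 = 1 := by
  obtain ⟨⟨m, hm⟩, hdown⟩ := hX
  rw [degCount, card_eq_one]
  refine ⟨0, eq_singleton_iff_unique_mem.mpr ⟨?_, fun n hn ↦ ?_⟩⟩
  · exact mem_filter.mpr ⟨hdown m hm 0 zero_le, sum_zero_index⟩
  · exact (degree_eq_zero_iff n).mp (mem_filter.mp hn).2

lemma degCount_one_of_forall_single_mem {X : Finset (Fin r →₀ ℕ)}
    (hX : ∀ k, single k 1 ∈ X) : degCount X 1 = r := by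
  have hlayer : X.filter (monDeg · = 1) = univ.image (single · 1) := by
    ext m
    simp only [mem_filter, mem_image, mem_univ, true_and]
    constructor
    · rintro ⟨-, hm⟩
      have hm' : m ∈ {d : Fin r →₀ ℕ | d.degree = 1} := hm
      simpa [← range_single_one] using hm'
    · rintro ⟨k, rfl⟩
      exact ⟨hX k, degree_single k 1⟩
  rw [degCount, hlayer, card_image_of_injective _ (single_left_injective one_ne_zero),
    card_univ, Fintype.card_fin]

end Degree

section DownClosure

variable {r : ℕ}

noncomputable def downClosure (G : Finset (Fin r →₀ ℕ)) : Finset (Fin r →₀ ℕ) :=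
  G.biUnion Iic

variable {G : Finset (Fin r →₀ ℕ)}

lemma mem_downClosure {m : Fin r →₀ ℕ} : m ∈ downClosure G ↔ ∃ g ∈ G, m ≤ g := by
  simp [downClosure]

lemma isOrderIdeal_downClosure (hG : G.Nonempty) : IsOrderIdeal (downClosure G) := by
  obtain ⟨g, hg⟩ := hG
  refine ⟨⟨g, mem_downClosure.mpr ⟨g, hg, le_rfl⟩⟩, fun m hm n hnm ↦ ?_⟩
  obtain ⟨g', hg', hmg'⟩ := mem_downClosure.mp hm
  exact mem_downClosure.mpr ⟨g', hg', hnm.trans hmg'⟩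

lemma monDeg_le_of_mem_downClosure {d : ℕ} (hG : ∀ g ∈ G, monDeg g = d) {m : Fin r →₀ ℕ}
    (hm : m ∈ downClosure G) : monDeg m ≤ d := by
  obtain ⟨g, hg, hmg⟩ := mem_downClosure.mp hm
  exact hG g hg ▸ degree_mono hmg

lemma isPureSet_downClosure {d : ℕ} (hG : ∀ g ∈ G, monDeg g = d) :
    IsPureSet (downClosure G) := by
  suffices ∀ m ∈ downClosure G, (∀ p ∈ downClosure G, m ≤ p → p = m) → monDeg m = d from
    fun m hm n hn hmax hnmax ↦ (this m hm hmax).trans (this n hn hnmax).symm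
  intro m hm hmax
  obtain ⟨g, hg, hmg⟩ := mem_downClosure.mp hm
  rw [← hmax g (mem_downClosure.mpr ⟨g, hg, le_rfl⟩) hmg, hG g hg]

lemma degCount_downClosure_top {d : ℕ} (hG : ∀ g ∈ G, monDeg g = d) :
    degCount (downClosure G) d = #G := by
  rw [degCount]
  congr 1
  ext m
  simp only [mem_filter, mem_downClosure]
  constructor
  · rintro ⟨⟨g, hg, hmg⟩, hm⟩
    rwa [eq_of_le_of_degree_eq hmg ((hm.trans (hG g hg).symm))]
  · exact fun hm ↦ ⟨⟨m, hm, le_rfl⟩, hG m hm⟩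

lemma degCount_downClosure_of_lt {d : ℕ} (hG : ∀ g ∈ G, monDeg g = d) {i : ℕ} (hi : d < i) :
    degCount (downClosure G) i = 0 := by
  rw [degCount, card_eq_zero, filter_eq_empty_iff]
  exact fun m hm hmi ↦ (monDeg_le_of_mem_downClosure hG hm).not_gt (hmi ▸ hi)

end DownClosure

section MulSq

variable {r : ℕ}

noncomputable def mulSqMon (i j : Fin r) : Fin r →₀ ℕ := single i 1 + single j 2

lemma monDeg_mulSqMon (i j : Fin r) : monDeg (mulSqMon i j) = 3 := by
  simp [monDeg_eq_degree, mulSqMon]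

lemma mulSqMon_injective : Function.Injective fun p : Fin r × Fin r ↦ mulSqMon p.1 p.2 := by
  rintro ⟨i, j⟩ ⟨i', j'⟩ h
  simpa [mulSqMon, single_add_single_eq_single_add_single] using h

variable (r) in
noncomputable def mulSqGens : Finset (Fin r →₀ ℕ) :=
  ({p | p.1 < p.2} : Finset (Fin r × Fin r)).image fun p ↦ mulSqMon p.1 p.2

lemma card_mulSqGens : #(mulSqGens r) = r.choose 2 := by
  rw [mulSqGens, card_image_of_injective _ mulSqMon_injective, Fintype.card_product_filter_lt,
    Fintype.card_fin]

lemma monDeg_of_mem_mulSqGens {g : Fin r →₀ ℕ} (hg : g ∈ mulSqGens r) : monDeg g = 3 := by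
  obtain ⟨p, -, rfl⟩ := mem_image.mp hg
  exact monDeg_mulSqMon p.1 p.2

lemma mem_downClosure_mulSqGens {m : Fin r →₀ ℕ} :
    m ∈ downClosure (mulSqGens r) ↔ ∃ i j, i < j ∧ m ≤ mulSqMon i j := by
  simp [mem_downClosure, mulSqGens]

lemma single_one_mem_downClosure_mulSqGens (hr : 2 ≤ r) (k : Fin r) :
    single k 1 ∈ downClosure (mulSqGens r) := by
  have : Nontrivial (Fin r) := Fin.nontrivial_iff_two_le.mpr hr
  obtain ⟨l, hl⟩ := exists_ne k
  rw [mem_downClosure_mulSqGens]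
  rcases hl.lt_or_gt with h | h
  · exact ⟨l, k, h, (single_le_single.mpr one_le_two).trans le_add_self⟩
  · exact ⟨k, l, h, le_self_add⟩

lemma eq_or_eq_of_le_mulSqMon {i j : Fin r} (hij : i ≠ j) {m : Fin r →₀ ℕ}
    (hm : m ≤ mulSqMon i j) (hd : monDeg m = 2) :
    m = single i 1 + single j 1 ∨ m = single j 2 := by
  obtain ⟨k, hk⟩ := exists_add_single_eq_of_le_of_degree_eq_succ hm
    (by rw [← monDeg_eq_degree, ← monDeg_eq_degree, monDeg_mulSqMon, hd])
  have hk_mem : k = i ∨ k = j := by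
    have := DFunLike.congr_fun hk k
    by_contra! hne
    simp [mulSqMon, hne.1.symm, hne.2.symm] at this
  rcases hk_mem with rfl | rfl
  · right
    rw [mulSqMon, add_comm m] at hk
    exact add_left_cancel hk
  · left
    rw [mulSqMon, ← one_add_one_eq_two, single_add, ← add_assoc] at hk
    exact add_right_cancel hk

lemma single_add_single_ne_single_two {σ : Type*} {i j k : σ} (hij : i ≠ j) :
    single i 1 + single j 1 ≠ single k (2 : ℕ) := by
  classical
  intro h
  have := DFunLike.congr_fun h i
  rw [Finsupp.add_apply, single_eq_same, single_eq_of_ne hij, single_apply] at this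
  split_ifs at this
  omega

lemma filter_monDeg_eq_two_downClosure_mulSqGens (hr : 0 < r) :
    (downClosure (mulSqGens r)).filter (monDeg · = 2) =
      ({p | p.1 < p.2} : Finset (Fin r × Fin r)).image (fun p ↦ single p.1 1 + single p.2 1) ∪
        (Ioi ⟨0, hr⟩).image (single · 2) := by
  ext m
  simp only [mem_filter, mem_union, mem_image, mem_downClosure_mulSqGens]
  constructor
  · rintro ⟨⟨i, j, hij, hm⟩, hd⟩
    rcases eq_or_eq_of_le_mulSqMon hij.ne hm hd with rfl | rfl
    · exact Or.inl ⟨(i, j), ⟨mem_univ _, hij⟩, rfl⟩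
    · exact Or.inr ⟨j, mem_Ioi.mpr (lt_of_le_of_lt (Nat.zero_le i) hij), rfl⟩
  · rintro (⟨⟨i, j⟩, hp, rfl⟩ | ⟨k, hk, rfl⟩)
    · refine ⟨⟨i, j, hp.2, ?_⟩, by simp [monDeg_eq_degree]⟩
      exact add_le_add_right (single_le_single.mpr one_le_two) _
    · exact ⟨⟨_, k, mem_Ioi.mp hk, le_add_self⟩, by simp [monDeg_eq_degree]⟩

lemma degCount_two_downClosure_mulSqGens (hr : 2 ≤ r) :
    degCount (downClosure (mulSqGens r)) 2 = r.choose 2 + r - 1 := by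
  let pairs : Finset (Fin r × Fin r) := {p | p.1 < p.2}
  have hinj : Set.InjOn (fun p : Fin r × Fin r ↦ single p.1 1 + single p.2 1) pairs := by
    rintro ⟨i, j⟩ hp ⟨i', j'⟩ hp' h
    simp only [pairs, coe_filter, mem_univ, true_and, Set.mem_ofPred_eq] at hp hp'
    obtain ⟨rfl, rfl⟩ | ⟨-, rfl, rfl⟩ | ⟨h2, -⟩ :=
      (single_add_single_eq_single_add_single one_ne_zero one_ne_zero).mp h
    · rfl
    · exact absurd (hp.trans hp') (lt_irrefl _)
    · exact absurd h2 two_ne_zero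
  have hdisj : Disjoint (pairs.image (fun p ↦ single p.1 1 + single p.2 1))
      ((Ioi ⟨0, by omega⟩).image (single · 2)) := by
    simp only [disjoint_left, mem_image, not_exists, not_and]
    rintro _ ⟨p, hp, rfl⟩ k - h
    exact single_add_single_ne_single_two (mem_filter.mp hp).2.ne h.symm
  rw [degCount, filter_monDeg_eq_two_downClosure_mulSqGens (by omega),
    card_union_of_disjoint hdisj, card_image_of_injOn hinj,
    card_image_of_injective _ (single_left_injective two_ne_zero), Fintype.card_product_filter_lt,
    Fintype.card_fin, Fin.card_Ioi, Fin.val_mk]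
  have hchoose := Nat.choose_pos (k := 2) hr
  omega

end MulSq

/-- For every integer `r ≥ 2`, the sequence `(1, r, C(r,2)+r-1, C(r,2))` is a pure
O-sequence. -/
theorem pure_special_sequence' (r : ℕ) (hr : 2 ≤ r) :
    IsPureOSequence [1, r, r.choose 2 + r - 1, r.choose 2] := by
  have hgens : ∀ g ∈ mulSqGens r, monDeg g = 3 := fun _ ↦ monDeg_of_mem_mulSqGens
  have hne : (mulSqGens r).Nonempty := card_pos.mp (card_mulSqGens ▸ Nat.choose_pos hr)
  have htop : degCount (downClosure (mulSqGens r)) 3 = r.choose 2 := by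
    rw [degCount_downClosure_top hgens, card_mulSqGens]
  refine ⟨r, downClosure (mulSqGens r), isOrderIdeal_downClosure hne, isPureSet_downClosure hgens,
    List.cons_ne_nil _ _, fun i ↦ ?_, htop ▸ (Nat.choose_pos hr).ne'⟩
  match i with
  | 0 => exact degCount_zero_of_isOrderIdeal (isOrderIdeal_downClosure hne)
  | 1 => exact degCount_one_of_forall_single_mem (single_one_mem_downClosure_mulSqGens hr)
  | 2 => exact degCount_two_downClosure_mulSqGens hr
  | 3 => exact htop
  | n + 4 => exact degCount_downClosure_of_lt hgens (by omega)
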